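/- arXiv:math/0601509 — 2 statements merged into one kernel-verified Lean document; each statement's English description precedes it below -/
import Mathlib

section
/- Let G be a locally compact group. Then S¹A(G) = A(G) ∩ L¹(G) equals A(G) as a set (equivalently, with equivalent norms) if and only if G is compact. Moreover, when G is compact, the identity map j : A(G) → S¹A(G) is bounded with 2 ≤ ‖j‖ ≤ 2 (i.e., ‖j‖ = 2 for normalized Haar measure), since ‖u‖_{S¹A} = ‖u·1‖_{S¹A} ≤ ‖u‖_{A(G)} ‖1‖_{S¹A} = 2‖u‖_{A(G)} and ‖j(1)‖ = 2. -/
open MeasureTheory Filter Topology ComplexConjugate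
open scoped ENNReal

noncomputable section

variable {G : Type} [Group G] [TopologicalSpace G] [IsTopologicalGroup G]
  [LocallyCompactSpace G] [MeasurableSpace G] [BorelSpace G]

/-- Convolution of two functions: `(f ∗ g)(s) = ∫ f(t) g(t⁻¹ s) dt`. -/
def conv (μ : Measure G) (f g : G → ℂ) : G → ℂ := fun s => ∫ t, f t * g (t⁻¹ * s) ∂μ

/-- Inversion: `fˇ(t) = f(t⁻¹)`. -/
def checkFun (f : G → ℂ) : G → ℂ := fun t => f t⁻¹

/-- `u` is the coefficient function `s ↦ ⟨λ(s)f, g⟩ = ∫ f(s⁻¹ t) conj (g t) dt`. -/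
def IsCoeff (μ : Measure G) (u f g : G → ℂ) : Prop :=
  ∀ s, u s = ∫ t, f (s⁻¹ * t) * conj (g t) ∂μ

/-- Membership in the Fourier algebra `A(G)`. -/
def InFourier (μ : Measure G) (u : G → ℂ) : Prop :=
  ∃ f g : G → ℂ, MemLp f 2 μ ∧ MemLp g 2 μ ∧ IsCoeff μ u f g

/-- The Fourier algebra norm `‖u‖_{A(G)} = inf ‖f‖₂ ‖g‖₂`. -/
def ANorm (μ : Measure G) (u : G → ℂ) : ℝ :=
  sInf {c | ∃ f g : G → ℂ, MemLp f 2 μ ∧ MemLp g 2 μ ∧ IsCoeff μ u f g ∧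
    c = (eLpNorm f 2 μ).toReal * (eLpNorm g 2 μ).toReal}

/-- The norm of the Segal algebra `S¹A(G) = A(G) ∩ L¹(G)`. -/
def SoneANorm (μ : Measure G) (u : G → ℂ) : ℝ := ANorm μ u + (eLpNorm u 1 μ).toReal

/-- The left regular representation `λ(s)f = f(s⁻¹ ·)` on `L²(G)`. -/
def lam (μ : Measure G) [μ.IsMulLeftInvariant] (s : G) : Lp ℂ 2 μ →L[ℂ] Lp ℂ 2 μ :=
  (Lp.compMeasurePreservingₗᵢ ℂ (fun t => s⁻¹ * t)
    (measurePreserving_mul_left μ s⁻¹)).toContinuousLinearMap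

/-- The group von Neumann algebra `VN(G)`, realized as the double commutant of the
left translation operators on `L²(G)`. -/
def VN (μ : Measure G) [μ.IsMulLeftInvariant] : Set (Lp ℂ 2 μ →L[ℂ] Lp ℂ 2 μ) :=
  {T | ∀ S : Lp ℂ 2 μ →L[ℂ] Lp ℂ 2 μ, (∀ s : G, Commute S (lam μ s)) → Commute T S}

/-- `T = Λ(φ)`: `T` is a bounded operator on `L²(G)` extending convolution by `φ`
on `L²(G) ∩ L¹(G)ˇ`. -/
def IsLam (μ : Measure G) [μ.IsMulLeftInvariant] (φ : G → ℂ)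
    (T : Lp ℂ 2 μ →L[ℂ] Lp ℂ 2 μ) : Prop :=
  ∀ (f : G → ℂ) (hf : MemLp f 2 μ), Integrable (checkFun f) μ →
    (T (hf.toLp f) : G → ℂ) =ᵐ[μ] conv μ φ f

/-- `φ ∈ Conv^∞(G)`: `φ ∈ L^∞(G)` and convolution by `φ` extends to a bounded
operator on `L²(G)`. -/
def IsConvolver (μ : Measure G) [μ.IsMulLeftInvariant] (φ : G → ℂ) : Prop :=
  MemLp φ ⊤ μ ∧ ∃ T, IsLam μ φ T

/-- The set `Λ(Conv^∞(G)) ⊆ VN(G)`. -/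
def LamConv (μ : Measure G) [μ.IsMulLeftInvariant] : Set (Lp ℂ 2 μ →L[ℂ] Lp ℂ 2 μ) :=
  {T | ∃ φ : G → ℂ, MemLp φ ⊤ μ ∧ IsLam μ φ T}

/-!
A coefficient `u(s) = ⟨λ(s) f, g⟩` of two `L²` functions is continuous (translation is
continuous on `L²`) and bounded by `‖f‖₂ ‖g‖₂`, hence by `‖u‖_A`. On a compact group of total
mass one this puts `u` in `L¹` with `‖u‖₁ ≤ ‖u‖_A`, and the constant `1 = ⟨λ(s) 1, 1⟩` has
`‖1‖_A = 1`. On a noncompact group take a compact neighbourhood `W` of `1` with pairwise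
disjoint translates `s n • W`, let `g = ∑ (n + 1)⁻¹ 𝟙_{s n • W}`, which lies in `L²` but not in
`L¹`, and `f = 𝟙_V` with `W⁻¹ W ⊆ V`. Then `u(x) = ∫_{x V} g ≥ μ(W) g(x)`, so `u ∉ L¹`.
-/

open Function
open scoped Pointwise NNReal

section DisjointIndicators

variable {α M : Type*} {A : ℕ → Set α}

lemma tsum_indicator_apply_of_mem [AddCommMonoid M] [TopologicalSpace M]
    (hA : Pairwise (Disjoint on A)) (b : ℕ → M) {n : ℕ} {t : α} (ht : t ∈ A n) :
    ∑' m, (A m).indicator (fun _ => b m) t = b n := by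
  rw [tsum_eq_single n fun m hm => Set.indicator_of_notMem
    (Set.disjoint_right.mp (hA hm) ht) _, Set.indicator_of_mem ht]

lemma tsum_indicator_apply_of_forall_notMem [AddCommMonoid M] [TopologicalSpace M]
    (b : ℕ → M) {t : α} (ht : ∀ n, t ∉ A n) :
    ∑' m, (A m).indicator (fun _ => b m) t = 0 := by
  simp [Set.indicator_of_notMem (ht _)]

end DisjointIndicators

def harmonicStep {α : Type*} (A : ℕ → Set α) (t : α) : ℝ≥0∞ :=
  ∑' n, (A n).indicator (fun _ => ((n : ℝ≥0∞) + 1)⁻¹) t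

lemma ENNReal.tsum_inv_nat_add_one : ∑' n : ℕ, ((n : ℝ≥0∞) + 1)⁻¹ = ∞ := by
  have h : ¬ Summable fun n : ℕ => (((n + 1 : ℕ) : ℝ))⁻¹ :=
    (summable_nat_add_iff 1).not.mpr Real.not_summable_natCast_inv
  have := (ENNReal.tsum_coe_eq_top_iff_not_summable_coe (f := fun n : ℕ => ((n : ℝ≥0) + 1)⁻¹)).mpr
    (by push_cast at h ⊢; exact h)
  simpa [ENNReal.coe_inv] using this

lemma ENNReal.tsum_inv_nat_add_one_sq_ne_top : ∑' n : ℕ, ((n : ℝ≥0∞) + 1)⁻¹ ^ 2 ≠ ∞ := by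
  have h : Summable fun n : ℕ => (((n + 1 : ℕ) : ℝ) ^ 2)⁻¹ :=
    (summable_nat_add_iff 1).mpr (Real.summable_nat_pow_inv.mpr (by norm_num))
  have := (ENNReal.tsum_coe_ne_top_iff_summable (f := fun n : ℕ => ((n : ℝ≥0) + 1)⁻¹ ^ 2)).mpr
    (by rw [← NNReal.summable_coe]; push_cast at h ⊢; simpa [inv_pow] using h)
  simpa [ENNReal.coe_inv, ENNReal.inv_pow] using this

section HarmonicStep

variable {α : Type*} {A : ℕ → Set α}

lemma harmonicStep_apply_of_mem (hA : Pairwise (Disjoint on A)) {n : ℕ} {t : α}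
    (ht : t ∈ A n) : harmonicStep A t = ((n : ℝ≥0∞) + 1)⁻¹ :=
  tsum_indicator_apply_of_mem hA _ ht

lemma harmonicStep_le_one (hA : Pairwise (Disjoint on A)) (t : α) : harmonicStep A t ≤ 1 := by
  by_cases ht : ∃ n, t ∈ A n
  · obtain ⟨n, hn⟩ := ht
    rw [harmonicStep_apply_of_mem hA hn]
    exact ENNReal.inv_le_one.mpr le_add_self
  · push Not at ht
    simp [harmonicStep, tsum_indicator_apply_of_forall_notMem _ ht]

lemma sq_harmonicStep (hA : Pairwise (Disjoint on A)) (t : α) :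
    harmonicStep A t ^ 2 = ∑' n, (A n).indicator (fun _ => ((n : ℝ≥0∞) + 1)⁻¹ ^ 2) t := by
  by_cases ht : ∃ n, t ∈ A n
  · obtain ⟨n, hn⟩ := ht
    rw [harmonicStep_apply_of_mem hA hn, tsum_indicator_apply_of_mem hA _ hn]
  · push Not at ht
    simp [harmonicStep, tsum_indicator_apply_of_forall_notMem _ ht]

variable [MeasurableSpace α] {μ : Measure α}

lemma measurable_harmonicStep (hA : ∀ n, MeasurableSet (A n)) : Measurable (harmonicStep A) :=
  Measurable.tsum fun n => measurable_const.indicator (hA n)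

lemma lintegral_harmonicStep {c : ℝ≥0∞} (hA : ∀ n, MeasurableSet (A n)) (hμA : ∀ n, μ (A n) = c)
    (hc : c ≠ 0) : ∫⁻ t, harmonicStep A t ∂μ = ∞ := by
  simp only [harmonicStep]
  rw [lintegral_tsum fun n => (measurable_const.indicator (hA n)).aemeasurable]
  simp [lintegral_indicator_const (hA _), hμA, ENNReal.tsum_mul_right,
    ENNReal.tsum_inv_nat_add_one, hc]

lemma lintegral_sq_harmonicStep_ne_top {c : ℝ≥0∞} (hAd : Pairwise (Disjoint on A))
    (hA : ∀ n, MeasurableSet (A n)) (hμA : ∀ n, μ (A n) = c) (hc : c ≠ ∞) :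
    ∫⁻ t, harmonicStep A t ^ 2 ∂μ ≠ ∞ := by
  simp only [sq_harmonicStep hAd]
  rw [lintegral_tsum fun n => (measurable_const.indicator (hA n)).aemeasurable]
  simp only [lintegral_indicator_const (hA _), hμA, ENNReal.tsum_mul_right]
  exact ENNReal.mul_ne_top ENNReal.tsum_inv_nat_add_one_sq_ne_top hc

lemma memLp_two_harmonicStep {c : ℝ≥0∞} (hAd : Pairwise (Disjoint on A))
    (hA : ∀ n, MeasurableSet (A n)) (hμA : ∀ n, μ (A n) = c) (hc : c ≠ ∞) :
    MemLp (fun t => ((harmonicStep A t).toReal : ℂ)) 2 μ := by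
  have henorm : ∀ t, ‖((harmonicStep A t).toReal : ℂ)‖ₑ = harmonicStep A t := fun t => by
    rw [enorm_eq_nnnorm, Complex.nnnorm_real, ← enorm_eq_nnnorm,
      Real.enorm_of_nonneg ENNReal.toReal_nonneg,
      ENNReal.ofReal_toReal ((harmonicStep_le_one hAd t).trans_lt ENNReal.one_lt_top).ne]
  refine ⟨(Complex.measurable_ofReal.comp
    (measurable_harmonicStep hA).ennreal_toReal).aestronglyMeasurable, ?_⟩
  rw [eLpNorm_eq_lintegral_rpow_enorm_toReal two_ne_zero ENNReal.ofNat_ne_top]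
  simp only [henorm, ENNReal.toReal_ofNat, ENNReal.rpow_two]
  exact ENNReal.rpow_lt_top_of_nonneg (by norm_num)
    (lintegral_sq_harmonicStep_ne_top hAd hA hμA hc)

end HarmonicStep

section Coefficients

variable (μ : Measure G) [μ.IsMulLeftInvariant]

lemma continuous_lam_apply [μ.InnerRegularCompactLTTop] [IsLocallyFiniteMeasure μ]
    (f : Lp ℂ 2 μ) : Continuous fun s => lam μ s f := by
  let translate : C(G, C(G, G)) :=
    (⟨fun p : G × G => p.1⁻¹ * p.2, by fun_prop⟩ : C(G × G, G)).curry
  exact continuous_const.compMeasurePreservingLp translate.continuous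
    (fun s => measurePreserving_mul_left μ s⁻¹) ENNReal.ofNat_ne_top

variable {μ}

lemma IsCoeff.eq_inner {u f g : G → ℂ} (hf : MemLp f 2 μ) (hg : MemLp g 2 μ)
    (hc : IsCoeff μ u f g) (s : G) : u s = inner ℂ (hg.toLp g) (lam μ s (hf.toLp f)) := by
  have hlam : (lam μ s (hf.toLp f) : G → ℂ) =ᵐ[μ] fun t => f (s⁻¹ * t) :=
    (Lp.coeFn_compMeasurePreserving _ _).trans
      ((measurePreserving_mul_left μ s⁻¹).quasiMeasurePreserving.ae_eq_comp hf.coeFn_toLp)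
  rw [hc s, L2.inner_def]
  refine integral_congr_ae ?_
  filter_upwards [hlam, hg.coeFn_toLp] with t hft hgt
  rw [RCLike.inner_apply, hft, hgt, mul_comm]

lemma IsCoeff.norm_le {u f g : G → ℂ} (hf : MemLp f 2 μ) (hg : MemLp g 2 μ)
    (hc : IsCoeff μ u f g) (s : G) :
    ‖u s‖ ≤ (eLpNorm f 2 μ).toReal * (eLpNorm g 2 μ).toReal := by
  calc ‖u s‖ ≤ ‖hg.toLp g‖ * ‖lam μ s (hf.toLp f)‖ := by
        rw [hc.eq_inner hf hg]; exact norm_inner_le_norm _ _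
    _ = (eLpNorm f 2 μ).toReal * (eLpNorm g 2 μ).toReal := by
        rw [lam, LinearIsometry.coe_toContinuousLinearMap, LinearIsometry.norm_map, mul_comm,
          Lp.norm_toLp, Lp.norm_toLp]

lemma IsCoeff.continuous [μ.InnerRegularCompactLTTop] [IsLocallyFiniteMeasure μ]
    {u f g : G → ℂ} (hf : MemLp f 2 μ) (hg : MemLp g 2 μ) (hc : IsCoeff μ u f g) :
    Continuous u := by
  rw [funext (hc.eq_inner hf hg)]
  exact continuous_const.inner (continuous_lam_apply μ _)

end Coefficients

section FourierNorm

variable {μ : Measure G}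

lemma ANorm_le {u f g : G → ℂ} (hf : MemLp f 2 μ) (hg : MemLp g 2 μ) (hc : IsCoeff μ u f g) :
    ANorm μ u ≤ (eLpNorm f 2 μ).toReal * (eLpNorm g 2 μ).toReal :=
  csInf_le ⟨0, by rintro _ ⟨_, _, -, -, -, rfl⟩; positivity⟩ ⟨f, g, hf, hg, hc, rfl⟩

lemma le_ANorm {u : G → ℂ} {c : ℝ} (hu : InFourier μ u)
    (h : ∀ f g, MemLp f 2 μ → MemLp g 2 μ → IsCoeff μ u f g →
      c ≤ (eLpNorm f 2 μ).toReal * (eLpNorm g 2 μ).toReal) :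
    c ≤ ANorm μ u := by
  obtain ⟨f, g, hf, hg, hc⟩ := hu
  refine le_csInf ⟨_, f, g, hf, hg, hc, rfl⟩ ?_
  rintro _ ⟨f, g, hf, hg, hc, rfl⟩
  exact h f g hf hg hc

variable [μ.IsMulLeftInvariant]

lemma InFourier.norm_le_ANorm {u : G → ℂ} (hu : InFourier μ u) (s : G) : ‖u s‖ ≤ ANorm μ u :=
  le_ANorm hu fun _ _ hf hg hc => hc.norm_le hf hg s

lemma InFourier.integrable [IsFiniteMeasure μ] [μ.InnerRegularCompactLTTop] {u : G → ℂ}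
    (hu : InFourier μ u) : Integrable u μ := by
  obtain ⟨f, g, hf, hg, hc⟩ := id hu
  exact ⟨(hc.continuous hf hg).aestronglyMeasurable, .of_bounded (ae_of_all _ hu.norm_le_ANorm)⟩

lemma InFourier.eLpNorm_one_toReal_le_ANorm (hμ : μ Set.univ = 1) {u : G → ℂ}
    (hu : InFourier μ u) : (eLpNorm u 1 μ).toReal ≤ ANorm μ u := by
  have h := eLpNorm_le_of_ae_bound (p := 1) (ae_of_all μ hu.norm_le_ANorm)
  rw [hμ, ENNReal.one_rpow, one_mul] at h
  exact ENNReal.toReal_le_of_le_ofReal ((norm_nonneg _).trans (hu.norm_le_ANorm 1)) h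

lemma ANorm_const_one (hμ : μ Set.univ = 1) : ANorm μ (fun _ => (1 : ℂ)) = 1 := by
  have : IsProbabilityMeasure μ := ⟨hμ⟩
  have hone : IsCoeff μ (fun _ => (1 : ℂ)) (fun _ => 1) (fun _ => 1) := fun _ => by simp
  refine le_antisymm ?_ ?_
  · simpa [eLpNorm_const' _ two_ne_zero ENNReal.ofNat_ne_top] using
      ANorm_le (memLp_const 1) (memLp_const 1) hone
  · simpa using InFourier.norm_le_ANorm ⟨_, _, memLp_const 1, memLp_const 1, hone⟩ 1

end FourierNorm

section Noncompact

lemma exists_pairwise_disjoint_smul [NoncompactSpace G] {K : Set G} (hK : IsCompact K) :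
    ∃ s : ℕ → G, Pairwise (Disjoint on fun n => s n • K) := by
  have : Std.Symm fun x y : G => Disjoint (x • K) (y • K) := ⟨fun _ _ h => h.symm⟩
  obtain ⟨s, -, hs⟩ := exists_seq_of_forall_finset_exists' (fun _ => True)
    (fun x y : G => Disjoint (x • K) (y • K)) fun F _ => by
      obtain ⟨y, hy⟩ :=
        exists_disjoint_smul_of_isCompact (F.isCompact_biUnion fun x _ => hK.smul x) hK
      exact ⟨y, trivial, fun x hx =>
        hy.mono_left (Set.subset_biUnion_of_mem (u := (· • K)) hx)⟩
  exact ⟨s, hs⟩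

variable {μ : Measure G} [μ.IsMulLeftInvariant]

lemma enorm_integral_indicator_mul_conj {V : Set G} (hV : MeasurableSet V) (hVμ : μ V ≠ ∞)
    {γ : G → ℝ≥0∞} (hγ : Measurable γ) (hγ1 : ∀ t, γ t ≤ 1) (x : G) :
    ‖∫ t, V.indicator (fun _ => (1 : ℂ)) (x⁻¹ * t) * conj ((γ t).toReal : ℂ) ∂μ‖ₑ =
      ∫⁻ t in x • V, γ t ∂μ := by
  have hpt : ∀ t, V.indicator (fun _ => (1 : ℂ)) (x⁻¹ * t) * conj ((γ t).toReal : ℂ) =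
      (((x • V).indicator (fun t => (γ t).toReal) t : ℝ) : ℂ) := fun t => by
    by_cases ht : x⁻¹ * t ∈ V <;>
      simp [Set.mem_smul_set_iff_inv_smul_mem, ht]
  have hfin : ∫⁻ t in x • V, γ t ∂μ ≠ ∞ := by
    refine ne_top_of_le_ne_top ?_ (setLIntegral_mono measurable_const fun t _ => hγ1 t)
    simpa [measure_smul] using hVμ
  rw [integral_congr_ae (ae_of_all _ hpt), integral_complex_ofReal,
    integral_indicator (hV.const_smul x),
    integral_toReal hγ.aemeasurable (ae_of_all _ fun t => (hγ1 t).trans_lt ENNReal.one_lt_top),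
    enorm_eq_nnnorm, Complex.nnnorm_real, ← enorm_eq_nnnorm,
    Real.enorm_of_nonneg ENNReal.toReal_nonneg, ENNReal.ofReal_toReal hfin]

lemma measure_mul_harmonicStep_le_setLIntegral {W V : Set G} (hW : MeasurableSet W)
    (hWV : W⁻¹ * W ⊆ V) {s : ℕ → G} (hs : Pairwise (Disjoint on fun n => s n • W)) (x : G) :
    μ W * harmonicStep (fun n => s n • W) x ≤
      ∫⁻ t in x • V, harmonicStep (fun n => s n • W) t ∂μ := by
  by_cases hx : ∃ n, x ∈ s n • W
  · obtain ⟨n, hx⟩ := hx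
    have hsub : s n • W ⊆ x • V := by
      obtain ⟨w, hw, rfl⟩ := hx
      rintro _ ⟨w', hw', rfl⟩
      refine Set.mem_smul_set_iff_inv_smul_mem.mpr (hWV ?_)
      simpa [smul_eq_mul, mul_assoc] using Set.mul_mem_mul (Set.inv_mem_inv.mpr hw) hw'
    calc μ W * harmonicStep (fun n => s n • W) x
        = ∫⁻ t in s n • W, harmonicStep (fun n => s n • W) t ∂μ := by
          rw [setLIntegral_congr_fun (hW.const_smul _) fun _ ht => harmonicStep_apply_of_mem hs ht,
            setLIntegral_const, measure_smul, harmonicStep_apply_of_mem hs hx, mul_comm]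
      _ ≤ ∫⁻ t in x • V, harmonicStep (fun n => s n • W) t ∂μ := lintegral_mono_set hsub
  · push Not at hx
    simp [harmonicStep, tsum_indicator_apply_of_forall_notMem _ hx]

end Noncompact

theorem exists_inFourier_not_integrable [NoncompactSpace G] (μ : Measure G) [μ.IsHaarMeasure] :
    ∃ u : G → ℂ, InFourier μ u ∧ ¬ Integrable u μ := by
  obtain ⟨W, hW1, hWc, hWcl⟩ := exists_mem_nhds_isCompact_isClosed (1 : G)
  obtain ⟨s, hs⟩ := exists_pairwise_disjoint_smul hWc
  have hA : ∀ n, MeasurableSet (s n • W) := fun n => (hWcl.smul _).measurableSet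
  have hμA : ∀ n, μ (s n • W) = μ W := fun n => measure_smul μ _ _
  have hW0 : μ W ≠ 0 := (Measure.measure_pos_of_mem_nhds μ hW1).ne'
  set V := closure (W⁻¹ * W)
  have hV : MeasurableSet V := isClosed_closure.measurableSet
  have hVμ : μ V ≠ ∞ := (hWc.inv.mul hWc).closure.measure_lt_top.ne
  set γ := harmonicStep fun n => s n • W
  have hγ : Measurable γ := measurable_harmonicStep hA
  set u : G → ℂ := fun x => ∫ t, V.indicator (fun _ => 1) (x⁻¹ * t) * conj ((γ t).toReal : ℂ) ∂μ
  have hu : InFourier μ u := ⟨_, _, memLp_indicator_const 2 hV 1 (.inr hVμ),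
    memLp_two_harmonicStep hs hA hμA hWc.measure_lt_top.ne, fun _ => rfl⟩
  have hlow : ∀ x, μ W * γ x ≤ ‖u x‖ₑ := fun x => by
    rw [enorm_integral_indicator_mul_conj hV hVμ hγ (harmonicStep_le_one hs) x]
    exact measure_mul_harmonicStep_le_setLIntegral hWcl.measurableSet subset_closure hs x
  have hinf : ∫⁻ x, ‖u x‖ₑ ∂μ = ∞ := top_le_iff.mp <|
    calc ∞ = μ W * ∫⁻ x, γ x ∂μ := by rw [lintegral_harmonicStep hA hμA hW0, ENNReal.mul_top hW0]
      _ = ∫⁻ x, μ W * γ x ∂μ := (lintegral_const_mul _ hγ).symm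
      _ ≤ ∫⁻ x, ‖u x‖ₑ ∂μ := lintegral_mono hlow
  exact ⟨u, hu, fun hint => hint.hasFiniteIntegral.ne hinf⟩

/-- `S¹A(G) = A(G) ∩ L¹(G)` equals `A(G)` (as a set, with equivalent
norms) iff `G` is compact.  Moreover when `G` is compact (with normalized Haar measure)
the identity `j : A(G) → S¹A(G)` satisfies `‖j‖ = 2`:  one has
`‖u‖_{S¹A} ≤ 2 ‖u‖_{A}` for all `u ∈ A(G)`, with equality for the constant function `1`
(where `‖1‖_A = 1` and `‖1‖_{S¹A} = 2`); and `j⁻¹` is contractive. -/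
theorem SoneA_eq_A_iff_compact
    (μ : Measure G) [μ.IsHaarMeasure] :
    ((∀ u : G → ℂ, InFourier μ u → Integrable u μ) ↔ IsCompact (Set.univ : Set G)) ∧
    (∀ u : G → ℂ, InFourier μ u → ANorm μ u ≤ SoneANorm μ u) ∧
    (IsCompact (Set.univ : Set G) → μ Set.univ = 1 →
      (∀ u : G → ℂ, InFourier μ u → SoneANorm μ u ≤ 2 * ANorm μ u) ∧
      ANorm μ (fun _ : G => (1:ℂ)) = 1 ∧
      SoneANorm μ (fun _ : G => (1:ℂ)) = 2) := by
  refine ⟨⟨fun h => ?_, fun hG u hu => ?_⟩, fun u _ => ?_, fun _ hμ => ⟨fun u hu => ?_, ?_, ?_⟩⟩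
  · by_contra hG
    have : NoncompactSpace G := ⟨hG⟩
    obtain ⟨u, hu, hnot⟩ := exists_inFourier_not_integrable μ
    exact hnot (h u hu)
  · have : CompactSpace G := ⟨hG⟩
    exact hu.integrable
  · exact le_add_of_nonneg_right ENNReal.toReal_nonneg
  · rw [SoneANorm, two_mul]
    exact add_le_add_right (hu.eLpNorm_one_toReal_le_ANorm hμ) _
  · exact ANorm_const_one hμ
  · have : IsProbabilityMeasure μ := ⟨hμ⟩
    norm_num [SoneANorm, ANorm_const_one hμ, eLpNorm_const' _ one_ne_zero ENNReal.one_ne_top]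

end
end

section
/- Let G be a locally compact group, S a compact subset of G, and H a closed non-open subgroup (so S ∩ H is compact and Haar-null). For every ε > 0 and every compact neighbourhood C of S ∩ H with m(C) < ε, there is a symmetric neighbourhood U of the identity with (S ∩ H)U² ⊆ C such that the function v(s) = m(sU ∩ (S∩H)U)/m(U) satisfies: ‖v‖_∞ = 1, v = 1 on S ∩ H, supp(v) ⊆ (S∩H)U² ⊆ C, and v ∈ A(G) with v(s) = (1/m(U))⟨λ(s)1_U, 1_{(S∩H)U}⟩. -/
/-!
Take a compact symmetric neighbourhood `U` of `1` with `K U² ⊆ C`, where `K = S ∩ H`. Then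
`v(s) = m(sU ∩ KU) / m(U)` is the matrix coefficient `⟨λ(s) 1_U, 1_{KU}⟩ / m(U)` of two
`L²` functions, hence lies in `A(G)`. Left invariance gives `v ≤ 1`, `sU ⊆ KU` gives `v = 1`
on `K`, and `v(s) ≠ 0` forces `sU` to meet `KU`, that is `s ∈ KUU⁻¹ = KU²`.
-/
open MeasureTheory Filter Topology ComplexConjugate
open scoped ENNReal Pointwise

noncomputable section

variable {G : Type} [Group G] [TopologicalSpace G] [IsTopologicalGroup G]
  [LocallyCompactSpace G] [MeasurableSpace G] [BorelSpace G]

section Overlap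

variable {Γ : Type*} [Group Γ] [MeasurableSpace Γ]

def overlap (μ : Measure Γ) (U A : Set Γ) (s : Γ) : ℝ := μ.real (s • U ∩ A) / μ.real U

theorem overlap_nonneg (μ : Measure Γ) (U A : Set Γ) (s : Γ) : 0 ≤ overlap μ U A s := by
  unfold overlap; positivity

theorem support_overlap_subset (μ : Measure Γ) (U A : Set Γ) :
    Function.support (overlap μ U A) ⊆ A / U := by
  intro s hs
  have hne : (s • U ∩ A).Nonempty := by
    by_contra h
    simp [overlap, Set.not_nonempty_iff_eq_empty.1 h] at hs
  obtain ⟨a, b, ⟨ha, hb⟩, rfl⟩ := Set.smul_inter_nonempty_iff'.1 hne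
  exact Set.div_mem_div ha hb

theorem integral_indicator_inv_mul_mul_indicator [MeasurableMul Γ] (μ : Measure Γ) {U A : Set Γ}
    (hU : MeasurableSet U) (hA : MeasurableSet A) (s : Γ) :
    ∫ t, U.indicator (fun _ => (1 : ℂ)) (s⁻¹ * t) * A.indicator (fun _ => 1) t ∂μ =
      μ.real (s • U ∩ A) := by
  have htranslate : ∀ t, U.indicator (fun _ => (1 : ℂ)) (s⁻¹ * t) =
      (s • U).indicator (fun _ => 1) t := fun t => by
    classical
    simp [Set.indicator_apply, Set.mem_smul_set_iff_inv_smul_mem]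
  simp_rw [htranslate, ← Set.inter_indicator_mul, mul_one]
  rw [integral_indicator_const _ ((hU.const_smul s).inter hA)]
  simp

theorem overlap_eq_inv_mul_integral [MeasurableMul Γ] (μ : Measure Γ) {U A : Set Γ}
    (hU : MeasurableSet U) (hA : MeasurableSet A) (s : Γ) :
    (overlap μ U A s : ℂ) = (μ.real U : ℂ)⁻¹ *
      ∫ t, U.indicator (fun _ => (1 : ℂ)) (s⁻¹ * t) * A.indicator (fun _ => 1) t ∂μ := by
  rw [integral_indicator_inv_mul_mul_indicator μ hU hA, overlap]
  push_cast
  ring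

variable {μ : Measure Γ} [μ.IsMulLeftInvariant]

theorem overlap_le_one (U A : Set Γ) (s : Γ) : overlap μ U A s ≤ 1 := by
  rcases eq_or_ne (μ U) ⊤ with hU | hU
  · simp [overlap, Measure.real, hU]
  · refine div_le_one_of_le₀ ?_ measureReal_nonneg
    calc μ.real (s • U ∩ A) ≤ μ.real (s • U) :=
          measureReal_mono Set.inter_subset_left (by rwa [measure_smul])
      _ = μ.real U := by simp [Measure.real]

theorem overlap_eq_one {U A : Set Γ} {s : Γ} (hU₀ : μ U ≠ 0) (hU : μ U ≠ ⊤) (hs : s • U ⊆ A) :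
    overlap μ U A s = 1 := by
  rw [overlap, Set.inter_eq_left.2 hs, measureReal_def, measureReal_def, measure_smul,
    div_self (ENNReal.toReal_ne_zero.2 ⟨hU₀, hU⟩)]

end Overlap

section FourierAlgebra

variable {Γ : Type} [Group Γ] [MeasurableSpace Γ] [MeasurableMul Γ] (μ : Measure Γ) {U A : Set Γ}

theorem isCoeff_overlap (hU : MeasurableSet U) (hA : MeasurableSet A) :
    IsCoeff μ (fun s => (overlap μ U A s : ℂ))
      (U.indicator fun _ => (μ.real U : ℂ)⁻¹) (A.indicator fun _ => 1) := by
  intro s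
  have hconj : ∀ t, conj (A.indicator (fun _ => (1 : ℂ)) t) = A.indicator (fun _ => 1) t :=
    fun t => by by_cases ht : t ∈ A <;> simp [ht]
  have hscale : ∀ t, U.indicator (fun _ => (μ.real U : ℂ)⁻¹) t =
      (μ.real U : ℂ)⁻¹ * U.indicator (fun _ => 1) t :=
    fun t => by simpa using Set.indicator_const_mul U (fun _ => (1 : ℂ)) (μ.real U : ℂ)⁻¹ t
  simp_rw [hconj, hscale, mul_assoc]
  rw [integral_const_mul, overlap_eq_inv_mul_integral μ hU hA]

theorem inFourier_overlap (hU : MeasurableSet U) (hA : MeasurableSet A) (hμU : μ U ≠ ⊤)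
    (hμA : μ A ≠ ⊤) :
    InFourier μ (fun s => (overlap μ U A s : ℂ)) :=
  ⟨_, _, memLp_indicator_const 2 hU _ (Or.inr hμU), memLp_indicator_const 2 hA _ (Or.inr hμA),
    isCoeff_overlap μ hU hA⟩

end FourierAlgebra

theorem exists_isCompact_inv_eq_nhds_one_mul_mul_subset {Γ : Type*} [Group Γ]
    [TopologicalSpace Γ] [IsTopologicalGroup Γ] [LocallyCompactSpace Γ] {K C : Set Γ}
    (hK : IsCompact K) (hKC : K ⊆ interior C) :
    ∃ U ∈ 𝓝 (1 : Γ), IsCompact U ∧ IsClosed U ∧ U⁻¹ = U ∧ K * U * U ⊆ C := by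
  obtain ⟨V, hV, hKV⟩ := compact_open_separated_mul_right hK isOpen_interior hKC
  obtain ⟨L, hL, hL1⟩ := exists_compact_mem_nhds (1 : Γ)
  obtain ⟨U, hU1, hUcl, hUinv, hUU⟩ :=
    exists_closed_nhds_one_inv_eq_mul_subset (inter_mem hV hL1)
  have hUVL : U ⊆ V ∩ L := (Set.subset_mul_left U (mem_of_mem_nhds hU1)).trans hUU
  refine ⟨U, hU1, hL.of_isClosed_subset hUcl (hUVL.trans Set.inter_subset_right), hUcl, hUinv, ?_⟩
  rw [mul_assoc]
  exact (Set.mul_subset_mul_left (hUU.trans Set.inter_subset_left)).trans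
    (hKV.trans interior_subset)

theorem fourier_bump_function_general
    (μ : Measure G) [μ.IsHaarMeasure]
    (S : Set G) (hS : IsCompact S)
    (H : Subgroup G) (hHclosed : IsClosed (H : Set G))
    (hne : (S ∩ ↑H).Nonempty)
    (C : Set G) (hCnbhd : ∀ x ∈ S ∩ ↑H, C ∈ 𝓝 x) :
    ∃ U ∈ 𝓝 (1 : G), U = U⁻¹ ∧ (S ∩ ↑H) * U * U ⊆ C ∧
      ∀ v : G → ℂ,
        (v = fun s => (((μ (((fun x => s * x) '' U) ∩ ((S ∩ ↑H) * U))).toReal /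
            (μ U).toReal : ℝ) : ℂ)) →
        (∀ s, ‖v s‖ ≤ 1) ∧ (∃ s, ‖v s‖ = 1) ∧
        (∀ s ∈ S ∩ ↑H, v s = 1) ∧
        Function.support v ⊆ (S ∩ ↑H) * U * U ∧
        (∀ s : G, v s = (((μ U).toReal)⁻¹ : ℂ) *
          ∫ t, U.indicator (fun _ => (1:ℂ)) (s⁻¹ * t) *
            ((S ∩ ↑H) * U).indicator (fun _ => (1:ℂ)) t ∂μ) ∧
        InFourier μ v := by
  set K := S ∩ (H : Set G)
  have hK : IsCompact K := hS.inter_right hHclosed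
  obtain ⟨U, hU1, hUcpt, hUcl, hUinv, hKUU⟩ :=
    exists_isCompact_inv_eq_nhds_one_mul_mul_subset hK fun x hx =>
      mem_interior_iff_mem_nhds.2 (hCnbhd x hx)
  have hμU : μ U ≠ ⊤ := hUcpt.measure_ne_top
  have hμU₀ : μ U ≠ 0 := (μ.measure_pos_of_mem_nhds hU1).ne'
  have hKU : IsClosed (K * U) := hUcl.mul_left_of_isCompact hK
  have hone : ∀ s ∈ K, overlap μ U (K * U) s = 1 := fun s hs =>
    overlap_eq_one hμU₀ hμU (Set.smul_set_subset_mul hs)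
  refine ⟨U, hU1, hUinv.symm, hKUU, ?_⟩
  intro v hv
  replace hv : v = fun s => (overlap μ U (K * U) s : ℂ) := hv
  subst hv
  refine ⟨fun s => ?_, ?_, fun s hs => by simp [hone s hs], ?_, fun s => ?_, ?_⟩
  · simpa [abs_of_nonneg (overlap_nonneg μ U _ s)] using overlap_le_one U (K * U) s
  · obtain ⟨s, hs⟩ := hne
    exact ⟨s, by simp [hone s hs]⟩
  · intro s hs
    have hs' := support_overlap_subset μ U (K * U) (by simpa using hs)
    rwa [div_eq_mul_inv, hUinv] at hs'
  · exact overlap_eq_inv_mul_integral μ hUcl.measurableSet hKU.measurableSet s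
  · exact inFourier_overlap μ hUcl.measurableSet hKU.measurableSet hμU
      (hK.mul hUcpt).measure_ne_top

/-- Let `S ⊆ G` be compact and `H` a closed non-open subgroup (so
`S ∩ H` is compact and Haar-null).  For every `ε > 0` and every compact neighbourhood
`C` of `S ∩ H` with `m(C) < ε`, there is a symmetric neighbourhood `U` of the identity
with `(S∩H)U² ⊆ C` such that `v(s) = m(sU ∩ (S∩H)U)/m(U)` satisfies `‖v‖_∞ = 1`,
`v = 1` on `S ∩ H`, `supp v ⊆ (S∩H)U² ⊆ C`, and
`v ∈ A(G)` with `v(s) = (1/m(U)) ⟨λ(s)1_U, 1_{(S∩H)U}⟩`. -/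
theorem fourier_bump_function
    (μ : Measure G) [μ.IsHaarMeasure]
    (S : Set G) (hS : IsCompact S)
    (H : Subgroup G) (hHclosed : IsClosed (H : Set G)) (hHnotopen : ¬ IsOpen (H : Set G))
    (hne : (S ∩ ↑H).Nonempty)
    (ε : ℝ) (hε : 0 < ε)
    (C : Set G) (hCcpt : IsCompact C) (hCnbhd : ∀ x ∈ S ∩ ↑H, C ∈ 𝓝 x)
    (hCsmall : μ C < ENNReal.ofReal ε) :
    ∃ U ∈ 𝓝 (1 : G), U = U⁻¹ ∧ (S ∩ ↑H) * U * U ⊆ C ∧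
      ∀ v : G → ℂ,
        (v = fun s => (((μ (((fun x => s * x) '' U) ∩ ((S ∩ ↑H) * U))).toReal /
            (μ U).toReal : ℝ) : ℂ)) →
        (∀ s, ‖v s‖ ≤ 1) ∧ (∃ s, ‖v s‖ = 1) ∧
        (∀ s ∈ S ∩ ↑H, v s = 1) ∧
        Function.support v ⊆ (S ∩ ↑H) * U * U ∧
        (∀ s : G, v s = (((μ U).toReal)⁻¹ : ℂ) *
          ∫ t, U.indicator (fun _ => (1:ℂ)) (s⁻¹ * t) *
            ((S ∩ ↑H) * U).indicator (fun _ => (1:ℂ)) t ∂μ) ∧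
        InFourier μ v :=
  fourier_bump_function_general μ S hS H hHclosed hne C hCnbhd

end
end
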